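/- arXiv:0712.0987 — 2 statements merged into one kernel-verified Lean document; each statement's English description precedes it below -/
import Mathlib

section
/- Fix $\alpha \in (1,2]$, $c_+ > 0$, $x \geq 0$, $\lambda > 0$. Set $c_t = [c_+(\alpha-1)t]^{1/(\alpha-1)}$, $\psi(\mu) = c_+\mu^{\alpha}$, and $u_t(\mu) = [c_+(\alpha-1)t + \mu^{-(\alpha-1)}]^{-1/(\alpha-1)}$. Then $\lim_{t\to\infty} e^{-x u_t(\lambda/c_t)} \frac{\psi(u_t(\lambda/c_t))}{\psi(\lambda/c_t)} = \frac{1}{[\lambda^{\alpha-1} + 1]^{\alpha/(\alpha-1)}}$. -/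
/-!
Put `s = c₊(α-1)t` and `p = α - 1`, so that `c_t = s^{1/p}`. Then `(λ/c_t)^{-p} = λ^{-p} s`, hence
`u_t(λ/c_t) = ((1 + λ^{-p}) s)^{-1/p}`. This tends to `0`, so the exponential factor tends to `1`,
while `u_t(λ/c_t) / (λ/c_t) = ((1 + λ^{-p}) λ^p)^{-1/p} = (λ^p + 1)^{-1/p}` does not depend on `t`:
the ratio `ψ(u_t(λ/c_t)) / ψ(λ/c_t)` is constantly `(λ^p + 1)^{-α/p}`.
-/

open Real Filter Topology

section Scaling

variable {p s lam : ℝ}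

lemma div_rpow_inv_rpow_neg (hp : p ≠ 0) (hs : 0 ≤ s) (hlam : 0 ≤ lam) :
    (lam / s ^ p⁻¹) ^ (-p) = lam ^ (-p) * s := by
  rw [div_rpow hlam (rpow_nonneg hs _), ← rpow_mul hs, inv_mul_eq_div, neg_div,
    div_self hp, rpow_neg_one, div_inv_eq_mul]

lemma add_div_rpow_inv_rpow_neg (hp : p ≠ 0) (hs : 0 ≤ s) (hlam : 0 ≤ lam) :
    s + (lam / s ^ p⁻¹) ^ (-p) = (1 + lam ^ (-p)) * s := by
  rw [div_rpow_inv_rpow_neg hp hs hlam]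
  ring

lemma one_add_rpow_neg_mul_rpow (hlam : 0 < lam) :
    (1 + lam ^ (-p)) * lam ^ p = lam ^ p + 1 := by
  rw [add_mul, one_mul, ← rpow_add hlam, neg_add_cancel, rpow_zero]

lemma scaled_rpow_neg_inv_div (hp : p ≠ 0) (hs : 0 < s) (hlam : 0 < lam) :
    ((1 + lam ^ (-p)) * s) ^ (-p⁻¹) / (lam / s ^ p⁻¹) = (lam ^ p + 1) ^ (-p⁻¹) := by
  have hL : 0 ≤ 1 + lam ^ (-p) := by positivity
  rw [← one_add_rpow_neg_mul_rpow hlam, mul_rpow hL hs.le, mul_rpow hL (by positivity),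
    ← rpow_mul hlam.le, mul_neg, mul_inv_cancel₀ hp, rpow_neg_one, rpow_neg hs.le]
  field_simp

lemma scaled_rpow_div_rpow (hp : p ≠ 0) (hs : 0 < s) (hlam : 0 < lam) (α : ℝ) :
    (((1 + lam ^ (-p)) * s) ^ (-p⁻¹)) ^ α / (lam / s ^ p⁻¹) ^ α
      = 1 / (lam ^ p + 1) ^ (α / p) := by
  rw [← div_rpow (by positivity) (by positivity), scaled_rpow_neg_inv_div hp hs hlam,
    ← rpow_mul (by positivity), neg_mul, inv_mul_eq_div, rpow_neg (by positivity), one_div]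

end Scaling

theorem stmt_6_general (α c x lam : ℝ) (hα : α ∈ Set.Ioc (1:ℝ) 2) (hc : 0 < c)
    (hlam : 0 < lam) :
    Tendsto (fun t : ℝ =>
        let ct := (c * (α - 1) * t) ^ ((α - 1)⁻¹)
        let u := (c * (α - 1) * t + (lam / ct) ^ (-(α - 1))) ^ (-(α - 1)⁻¹)
        Real.exp (-(x * u)) * (c * u ^ α) / (c * (lam / ct) ^ α))
      atTop (nhds (1 / (lam ^ (α - 1) + 1) ^ (α / (α - 1)))) := by
  have hp : 0 < α - 1 := sub_pos.2 hα.1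
  have hu : Tendsto (fun t => ((1 + lam ^ (-(α - 1))) * (c * (α - 1) * t)) ^ (-(α - 1)⁻¹))
      atTop (𝓝 0) :=
    (tendsto_rpow_neg_atTop (inv_pos.2 hp)).comp
      ((tendsto_id.const_mul_atTop (by positivity)).const_mul_atTop (by positivity))
  have hexp := (continuous_exp.tendsto _).comp (hu.const_mul x).neg
  rw [mul_zero, neg_zero, exp_zero] at hexp
  have hlim := hexp.mul_const (1 / (lam ^ (α - 1) + 1) ^ (α / (α - 1)))
  rw [one_mul] at hlim
  refine hlim.congr' ?_
  filter_upwards [eventually_gt_atTop 0] with t ht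
  have hs : 0 < c * (α - 1) * t := by positivity
  simp only [add_div_rpow_inv_rpow_neg hp.ne' hs.le hlam.le, mul_div_assoc,
    mul_div_mul_left _ _ hc.ne', scaled_rpow_div_rpow hp.ne' hs hlam, Function.comp_apply]

/-- CBI quasi-stationary-type limit:
`e^{-x u_t(λ/c_t)} ψ(u_t(λ/c_t))/ψ(λ/c_t) → [λ^{α-1}+1]^{-α/(α-1)}` as `t → ∞`,
with `c_t = [c₊(α-1)t]^{1/(α-1)}`, `ψ(μ) = c₊μ^α` and
`u_t(μ) = [c₊(α-1)t + μ^{-(α-1)}]^{-1/(α-1)}`. -/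
theorem stmt_6 (α c x lam : ℝ) (hα : α ∈ Set.Ioc (1:ℝ) 2) (hc : 0 < c)
    (hx : 0 ≤ x) (hlam : 0 < lam) :
    Tendsto (fun t : ℝ =>
        let ct := (c * (α - 1) * t) ^ ((α - 1)⁻¹)
        let u := (c * (α - 1) * t + (lam / ct) ^ (-(α - 1))) ^ (-(α - 1)⁻¹)
        Real.exp (-(x * u)) * (c * u ^ α) / (c * (lam / ct) ^ α))
      atTop (nhds (1 / (lam ^ (α - 1) + 1) ^ (α / (α - 1)))) :=
  stmt_6_general α c x lam hα hc hlam
end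

section
/- Let $\alpha > 1$ and let $\eta: [0,\infty) \to \mathbb{R}$ be a càdlàg function with $\eta_0 = 0$. Define $I_t(\beta) = \int_0^t e^{\beta \eta_s} ds$ for $\beta > 0$, $\zeta(t) = \inf\{s \geq 0 : I_s(\alpha) > t\}$, and for $x > 0$ let $X_t = x\exp\{\eta_{\zeta(t x^{-\alpha})}\}$ for $0 \leq t < x^{\alpha}I_{\infty}(\alpha)$. Let $A_t = \int_0^t X_s^{-1} ds$. Then $A_{x^{\alpha}I_t(\alpha)} = x^{\alpha-1} I_t(\alpha-1)$ for all $t \geq 0$ with $x^\alpha I_t(\alpha) < x^\alpha I_\infty(\alpha)$. -/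
/-!
`ζ` is the inverse of the strictly increasing primitive `F = I(α)` of the positive càdlàg function
`e^{αη}`. The substitution `s = x^α u` turns `A_{x^α F t}` into `x^{α-1} ∫_0^{F t} e^{-η(ζ u)} du`,
and the substitution `u = F r` should turn this into `∫_0^t e^{-η r} e^{αη r} dr`. As `F` is only
right-differentiable and `ζ` may jump, the second substitution is justified by comparing right
derivatives: `e^{-η ∘ ζ}` is right-continuous at `F r` because `ζ` is, so both sides have right
derivative `e^{(α-1)η r}` by the fundamental theorem of calculus.
-/

open Real Set Filter Topology MeasureTheory intervalIntegral Bornology Metric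
open scoped ENNReal

theorem integrableOn_of_isBounded_image {α E : Type*} [MeasurableSpace α] [NormedAddCommGroup E]
    {μ : Measure α} {f : α → E} {s : Set α} (hs : μ s < ∞) (hms : MeasurableSet s)
    (hf : AEStronglyMeasurable f (μ.restrict s)) (hb : IsBounded (f '' s)) :
    IntegrableOn f s μ :=
  let ⟨C, hC⟩ := hb.exists_norm_le
  .of_bound hs hf C ((ae_restrict_iff' hms).2 (ae_of_all _ fun _ hx => hC _ (mem_image_of_mem f hx)))

structure IsCadlag (f : ℝ → ℝ) : Prop where
  continuousWithinAt_Ici : ∀ s, ContinuousWithinAt f (Ici s) s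
  exists_tendsto_nhdsLT : ∀ s, ∃ l, Tendsto f (𝓝[<] s) (𝓝 l)

namespace IsCadlag

variable {f g : ℝ → ℝ}

theorem comp {φ : ℝ → ℝ} (hφ : Continuous φ) (hf : IsCadlag f) : IsCadlag fun s => φ (f s) where
  continuousWithinAt_Ici s := hφ.continuousAt.comp_continuousWithinAt (hf.continuousWithinAt_Ici s)
  exists_tendsto_nhdsLT s :=
    let ⟨l, hl⟩ := hf.exists_tendsto_nhdsLT s
    ⟨φ l, (hφ.tendsto l).comp hl⟩

theorem mul (hf : IsCadlag f) (hg : IsCadlag g) : IsCadlag fun s => f s * g s where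
  continuousWithinAt_Ici s := (hf.continuousWithinAt_Ici s).mul (hg.continuousWithinAt_Ici s)
  exists_tendsto_nhdsLT s :=
    let ⟨l, hl⟩ := hf.exists_tendsto_nhdsLT s
    let ⟨m, hm⟩ := hg.exists_tendsto_nhdsLT s
    ⟨l * m, hl.mul hm⟩

/-- Preimages of open sets are right neighbourhoods of each of their points. -/
theorem measurable (hf : IsCadlag f) : Measurable f :=
  measurable_of_isOpen fun _ hU => MeasurableSet.of_mem_nhdsGT fun x hx =>
    nhdsWithin_mono _ Ioi_subset_Ici_self
      ((hf.continuousWithinAt_Ici x).preimage_mem_nhdsWithin (hU.mem_nhds hx))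

/-- The left limit bounds `f` on a left neighbourhood and right continuity on a right one. -/
theorem isBounded_image (hf : IsCadlag f) {K : Set ℝ} (hK : IsCompact K) :
    IsBounded (f '' K) := by
  refine hK.induction_on (p := fun U => IsBounded (f '' U)) (by simp)
    (fun U V hUV hV => hV.subset (image_mono hUV))
    (fun U V hU hV => by rw [image_union]; exact hU.union hV) fun x _ => ?_
  obtain ⟨l, hl⟩ := hf.exists_tendsto_nhdsLT x
  refine ⟨f ⁻¹' (ball l 1 ∪ ball (f x) 1), mem_nhdsWithin_of_mem_nhds ?_,
    (isBounded_ball.union isBounded_ball).subset (image_preimage_subset _ _)⟩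
  rw [← nhdsLT_sup_nhdsGE x]
  exact ⟨mem_of_superset (hl (ball_mem_nhds l one_pos)) fun _ h => Or.inl h,
    mem_of_superset ((hf.continuousWithinAt_Ici x) (ball_mem_nhds (f x) one_pos))
      fun _ h => Or.inr h⟩

theorem intervalIntegrable (hf : IsCadlag f) (a b : ℝ) : IntervalIntegrable f volume a b := by
  rw [intervalIntegrable_iff']
  exact integrableOn_of_isBounded_image measure_Icc_lt_top
    measurableSet_uIcc hf.measurable.aestronglyMeasurable (hf.isBounded_image isCompact_uIcc)

theorem continuous_integral (hf : IsCadlag f) (a : ℝ) : Continuous fun u => ∫ x in a..u, f x :=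
  continuous_primitive hf.intervalIntegrable a

theorem hasDerivWithinAt_integral (hf : IsCadlag f) (a b : ℝ) :
    HasDerivWithinAt (fun u => ∫ x in a..u, f x) (f b) (Ici b) b :=
  integral_hasDerivWithinAt_right (hf.intervalIntegrable a b)
    hf.measurable.aestronglyMeasurable.stronglyMeasurableAtFilter
    ((hf.continuousWithinAt_Ici b).mono Ioi_subset_Ici_self)

end IsCadlag

theorem isCadlag_comp_max_zero {η : ℝ → ℝ}
    (hright : ∀ s, 0 ≤ s → ContinuousWithinAt η (Ici s) s)
    (hleft : ∀ s, 0 < s → ∃ l, Tendsto η (𝓝[<] s) (𝓝 l)) :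
    IsCadlag fun s => η (max s 0) where
  continuousWithinAt_Ici s :=
    (hright _ (le_max_right s 0)).comp (f := fun u => max u 0)
      (continuous_id.max continuous_const).continuousWithinAt
      fun _ hu => mem_Ici.mpr (max_le_max (mem_Ici.mp hu) le_rfl)
  exists_tendsto_nhdsLT s := by
    by_cases hs : 0 < s
    · obtain ⟨l, hl⟩ := hleft s hs
      refine ⟨l, hl.congr' ?_⟩
      filter_upwards [Ioo_mem_nhdsLT hs] with u hu
      rw [max_eq_left hu.1.le]
    · refine ⟨η 0, tendsto_const_nhds.congr' ?_⟩
      filter_upwards [self_mem_nhdsWithin] with u (hu : u < s)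
      rw [max_eq_right (by linarith)]

section firstPassage

/-- Junk value `sInf ∅ = 0` when `F` never exceeds `u` on `[0, ∞)`. -/
noncomputable def firstPassage (F : ℝ → ℝ) (u : ℝ) : ℝ :=
  sInf {s | 0 ≤ s ∧ u < F s}

variable {F : ℝ → ℝ} {u r s t : ℝ}

theorem firstPassage_nonneg : 0 ≤ firstPassage F u :=
  Real.sInf_nonneg fun _ hs => hs.1

theorem firstPassage_le (hs : 0 ≤ s) (hu : u < F s) : firstPassage F u ≤ s :=
  csInf_le ⟨0, fun _ h => h.1⟩ ⟨hs, hu⟩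

theorem le_firstPassage (hF : Monotone F) (hs : 0 ≤ s) (hu : u < F s) (hr : F r ≤ u) :
    r ≤ firstPassage F u :=
  le_csInf ⟨s, hs, hu⟩ fun _ h => (hF.reflect_lt (hr.trans_lt h.2)).le

theorem firstPassage_le_of_le (hF : StrictMono F) (ht : 0 ≤ t) (hu : u ≤ F t) :
    firstPassage F u ≤ t :=
  le_of_forall_gt_imp_ge_of_dense fun _ hc => firstPassage_le (ht.trans hc.le) (hu.trans_lt (hF hc))

theorem firstPassage_apply (hF : StrictMono F) (hr : 0 ≤ r) : firstPassage F (F r) = r :=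
  le_antisymm (firstPassage_le_of_le hF hr le_rfl)
    (le_firstPassage hF.monotone (by linarith) (hF (lt_add_one r)) le_rfl)

theorem monotoneOn_firstPassage (hs : 0 ≤ s) : MonotoneOn (firstPassage F) (Iio (F s)) :=
  fun _ _ _ hv huv => csInf_le_csInf ⟨0, fun _ h => h.1⟩ ⟨s, hs, hv⟩ fun _ h => ⟨h.1, huv.trans_lt h.2⟩

theorem tendsto_firstPassage_nhdsGE (hF : StrictMono F) (hr : 0 ≤ r) :
    Tendsto (firstPassage F) (𝓝[≥] (F r)) (𝓝[≥] r) := by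
  have hge : ∀ᶠ u in 𝓝[≥] (F r), r ≤ firstPassage F u := by
    filter_upwards [self_mem_nhdsWithin, mem_nhdsWithin_of_mem_nhds
      (Iio_mem_nhds (hF (lt_add_one r)))] with u hu hu'
    exact le_firstPassage hF.monotone (by linarith) hu' hu
  refine tendsto_nhdsWithin_iff.2 ⟨tendsto_order.2 ⟨fun c hc => hge.mono fun _ h => hc.trans_le h,
    fun c hc => ?_⟩, hge⟩
  obtain ⟨m, hrm, hmc⟩ := exists_between hc
  filter_upwards [mem_nhdsWithin_of_mem_nhds (Iio_mem_nhds (hF hrm))] with u hu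
  exact (firstPassage_le (hr.trans hrm.le) hu).trans_lt hmc

end firstPassage

section timeChange

variable {a h : ℝ → ℝ}

theorem strictMono_integral_of_pos (ha : ∀ r r', IntervalIntegrable a volume r r')
    (ha_pos : ∀ s, 0 < a s) : StrictMono fun r => ∫ s in (0 : ℝ)..r, a s := fun r r' hrr' => by
  dsimp only
  rw [← integral_add_adjacent_intervals (ha 0 r) (ha r r')]
  linarith [intervalIntegral_pos_of_pos_on (ha r r') (fun s _ => ha_pos s) hrr']

theorem integral_comp_firstPassage (ha : IsCadlag a) (ha_pos : ∀ s, 0 < a s) (hh : IsCadlag h)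
    {t : ℝ} (ht : 0 ≤ t) :
    ∫ u in (0 : ℝ)..∫ s in (0 : ℝ)..t, a s, h (firstPassage (fun r => ∫ s in (0 : ℝ)..r, a s) u) =
      ∫ s in (0 : ℝ)..t, h s * a s := by
  set F : ℝ → ℝ := fun r => ∫ s in (0 : ℝ)..r, a s
  have hF : StrictMono F := strictMono_integral_of_pos ha.intervalIntegrable ha_pos
  set g : ℝ → ℝ := fun u => h (firstPassage F u)
  have hg_meas : AEStronglyMeasurable g (volume.restrict (Iio (F (t + 1)))) :=
    (hh.measurable.comp_aemeasurable (aemeasurable_restrict_of_monotoneOn measurableSet_Iio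
      (monotoneOn_firstPassage (by linarith)))).aestronglyMeasurable
  have hF0 : F 0 = 0 := integral_same
  have hFt : 0 ≤ F t := hF0 ▸ hF.monotone ht
  have hF_mem : MapsTo F (Icc 0 t) (uIcc 0 (F t)) := fun r hr => by
    rw [uIcc_of_le hFt]
    exact ⟨hF0 ▸ hF.monotone hr.1, hF.monotone hr.2⟩
  have hg_int : IntegrableOn g (uIcc 0 (F t)) := by
    rw [uIcc_of_le hFt]
    refine integrableOn_of_isBounded_image measure_Icc_lt_top measurableSet_Icc
      (hg_meas.mono_set ((Icc_subset_Iio_iff hFt).2 (hF (lt_add_one t))))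
      ((hh.isBounded_image (isCompact_Icc (a := 0) (b := t))).subset ?_)
    rintro _ ⟨u, hu, rfl⟩
    exact ⟨_, ⟨firstPassage_nonneg, firstPassage_le_of_le hF ht hu.2⟩, rfl⟩
  have hG : ∀ r ∈ Ico 0 t,
      HasDerivWithinAt (fun v => ∫ u in (0 : ℝ)..v, g u) (h r) (Ici (F r)) (F r) := by
    intro r hr
    have hgF : g (F r) = h r := congrArg h (firstPassage_apply hF hr.1)
    have hg_cont : ContinuousWithinAt g (Ici (F r)) (F r) := by
      rw [ContinuousWithinAt, hgF]
      exact (hh.continuousWithinAt_Ici r).tendsto.comp (tendsto_firstPassage_nhdsGE hF hr.1)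
    rw [← hgF]
    exact integral_hasDerivWithinAt_right
      (hg_int.intervalIntegrable.mono_set
        (uIcc_subset_uIcc left_mem_uIcc (hF_mem (Ico_subset_Icc_self hr))))
      (AEStronglyMeasurable.stronglyMeasurableAtFilter_of_mem hg_meas (mem_nhdsWithin_of_mem_nhds
        (Iio_mem_nhds (hF (by linarith [hr.2])))))
      (hg_cont.mono Ioi_subset_Ici_self)
  refine eq_of_has_deriv_right_eq (f := fun r => ∫ u in (0 : ℝ)..F r, g u)
    (fun r hr => (hG r hr).comp r (ha.hasDerivWithinAt_integral 0 r) fun _ hy => hF.monotone hy)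
    (fun r _ => (hh.mul ha).hasDerivWithinAt_integral 0 r)
    ((continuousOn_primitive_interval hg_int).comp (ha.continuous_integral 0).continuousOn hF_mem)
    ((hh.mul ha).continuous_integral 0).continuousOn (by simp [hF0]) t ⟨ht, le_rfl⟩

end timeChange

theorem stmt_15_general (α : ℝ) (η : ℝ → ℝ)
    (hηright : ∀ s : ℝ, 0 ≤ s → ContinuousWithinAt η (Set.Ici s) s)
    (hηleft : ∀ s : ℝ, 0 < s → ∃ l : ℝ, Filter.Tendsto η (nhdsWithin s (Set.Iio s)) (nhds l))
    (x : ℝ) (hx : 0 < x)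
    (I : ℝ → ℝ → ℝ) (hI : ∀ t β, I t β = ∫ s in (0:ℝ)..t, Real.exp (β * η s))
    (ζ : ℝ → ℝ) (hζ : ∀ t, ζ t = sInf {s : ℝ | 0 ≤ s ∧ t < I s α})
    (X : ℝ → ℝ) (hX : ∀ t, X t = x * Real.exp (η (ζ (t / x ^ α))))
    (A : ℝ → ℝ) (hA : ∀ t, A t = ∫ s in (0:ℝ)..t, (X s)⁻¹) :
    ∀ t : ℝ, 0 ≤ t → (∃ s : ℝ, I t α < I s α) →
      A (x ^ α * I t α) = x ^ (α - 1) * I t (α - 1) := by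
  rintro t ht -
  set η' : ℝ → ℝ := fun s => η (max s 0)
  have hη' : IsCadlag η' := isCadlag_comp_max_zero hηright hηleft
  have hI' : ∀ β, ∀ r ≥ 0, I r β = ∫ s in (0 : ℝ)..r, exp (β * η' s) := fun β r hr => by
    rw [hI]
    refine integral_congr fun s hs => ?_
    rw [uIcc_of_le hr] at hs
    simp only [η', max_eq_left hs.1]
  have hζ' : ζ = firstPassage fun r => ∫ s in (0 : ℝ)..r, exp (α * η' s) := by
    ext u
    rw [hζ, firstPassage]
    congr 1
    ext s
    exact and_congr_right fun hs => by rw [hI' α s hs]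
  have hX' : ∀ s, (X s)⁻¹ = x⁻¹ * exp (-η' (ζ (s / x ^ α))) := fun s => by
    rw [hX, mul_inv, ← exp_neg, hζ']
    simp only [η', max_eq_left firstPassage_nonneg]
  have hxα : x ^ α ≠ 0 := (rpow_pos_of_pos hx α).ne'
  calc A (x ^ α * I t α)
      = x⁻¹ * ∫ s in (0 : ℝ)..x ^ α * I t α, exp (-η' (ζ (s / x ^ α))) := by
        simp only [hA, hX', intervalIntegral.integral_const_mul]
    _ = x⁻¹ * (x ^ α * ∫ u in (0 : ℝ)..I t α, exp (-η' (ζ u))) := by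
        rw [integral_comp_div (fun u => exp (-η' (ζ u))) hxα, zero_div,
          mul_div_cancel_left₀ _ hxα, smul_eq_mul]
    _ = x⁻¹ * (x ^ α * ∫ s in (0 : ℝ)..t, exp (-η' s) * exp (α * η' s)) := by
        rw [hI' α t ht, hζ', integral_comp_firstPassage (a := fun s => exp (α * η' s))
          (h := fun s => exp (-η' s)) (hη'.comp (φ := fun y => exp (α * y)) (by fun_prop))
          (fun _ => exp_pos _) (hη'.comp (φ := fun y => exp (-y)) (by fun_prop)) ht]
    _ = x ^ (α - 1) * I t (α - 1) := by
        rw [← mul_assoc, ← rpow_neg_one, ← rpow_add hx, hI' (α - 1) t ht]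
        congr 1
        · ring_nf
        · refine integral_congr fun s _ => ?_
          rw [← exp_add]
          ring_nf

/-- Deterministic core of Proposition 3: with `I_t(β) = ∫_0^t e^{βη_s} ds`,
`ζ(t) = inf{s : I_s(α) > t}`, `X_t = x e^{η_{ζ(t x^{-α})}}` and
`A_t = ∫_0^t X_s⁻¹ ds`, one has `A_{x^α I_t(α)} = x^{α-1} I_t(α-1)` whenever
`x^α I_t(α) < x^α I_∞(α)` (the latter expressed via `∃ s, I_t(α) < I_s(α)`). -/
theorem stmt_15 (α : ℝ) (hα : 1 < α) (η : ℝ → ℝ) (hη0 : η 0 = 0)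
    (hηright : ∀ s : ℝ, 0 ≤ s → ContinuousWithinAt η (Set.Ici s) s)
    (hηleft : ∀ s : ℝ, 0 < s → ∃ l : ℝ, Filter.Tendsto η (nhdsWithin s (Set.Iio s)) (nhds l))
    (x : ℝ) (hx : 0 < x)
    (I : ℝ → ℝ → ℝ) (hI : ∀ t β, I t β = ∫ s in (0:ℝ)..t, Real.exp (β * η s))
    (ζ : ℝ → ℝ) (hζ : ∀ t, ζ t = sInf {s : ℝ | 0 ≤ s ∧ t < I s α})
    (X : ℝ → ℝ) (hX : ∀ t, X t = x * Real.exp (η (ζ (t / x ^ α))))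
    (A : ℝ → ℝ) (hA : ∀ t, A t = ∫ s in (0:ℝ)..t, (X s)⁻¹) :
    ∀ t : ℝ, 0 ≤ t → (∃ s : ℝ, I t α < I s α) →
      A (x ^ α * I t α) = x ^ (α - 1) * I t (α - 1) :=
  stmt_15_general α η hηright hηleft x hx I hI ζ hζ X hX A hA
end
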